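/- Let X ~ N(0, P) and Z ~ N(0, σ_Z²) be independent real Gaussian random variables, and set U = X + tS with S ~ N(0, σ_S²) independent of (X,Z), and Y = X + Z + S. With the choice t = P/(P + σ_Z²), the random variable U − tY = X − t(X+Z) is statistically independent of the pair (X+Z, S), and consequently I(U;Y) − I(U;S) = (1/2)log₂(1 + P/σ_Z²). -/

import Mathlib

open MeasureTheory ProbabilityTheory

/-- Differential entropy (base 2) of a random variable with values in `E`,
computed from its pdf with respect to `μ`. -/
noncomputable def dEnt {Ω E : Type*} [MeasureSpace Ω] [MeasurableSpace E]
    (μ : Measure E) (U : Ω → E) : ℝ :=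
  -∫ x, (pdf U volume μ x).toReal * Real.logb 2 (pdf U volume μ x).toReal ∂μ

/-- Differential mutual information `I(U;Y)` of real random variables. -/
noncomputable def dMI {Ω : Type*} [MeasureSpace Ω] (U Y : Ω → ℝ) : ℝ :=
  dEnt (volume : Measure ℝ) U + dEnt (volume : Measure ℝ) Y
    - dEnt (volume : Measure (ℝ × ℝ)) (fun ω => (U ω, Y ω))

/-! With `t = P/(P+σ_Z)` the estimation error `V = X - t(X+Z)` is uncorrelated with `X+Z`;
the two are jointly Gaussian, hence independent, and as functions of `(X, Z)` they are jointly
independent of `S`.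

For the entropies, write `U = X + tS = V + tY`. The shear `(u, y) ↦ (u + ty, y)` preserves
Lebesgue measure, so it does not change differential entropy: `h(U,S) = h(X) + h(S)` and
`h(U,Y) = h(V) + h(Y)`. All terms except `h(X) - h(V)` cancel, and
`h(X) - h(V) = ½ log₂ (P / Var V) = ½ log₂ (1 + P/σ_Z)` because `Var V = P σ_Z / (P + σ_Z)`. -/

open Real
open scoped ENNReal NNReal

namespace ProbabilityTheory

lemma IndepFun.indepFun_prodMk_right {Ω α β γ : Type*} [MeasurableSpace Ω] [MeasurableSpace α]
    [MeasurableSpace β] [MeasurableSpace γ] {μ : Measure Ω} [IsProbabilityMeasure μ]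
    {A : Ω → α} {B : Ω → β} {C : Ω → γ}
    (hA : AEMeasurable A μ) (hB : AEMeasurable B μ) (hC : AEMeasurable C μ)
    (hAB : IndepFun A B μ) (hABC : IndepFun (fun ω => (A ω, B ω)) C μ) :
    IndepFun A (fun ω => (B ω, C ω)) μ := by
  have hBC : IndepFun B C μ := hABC.comp measurable_snd measurable_id
  rw [indepFun_iff_map_prod_eq_prod_map_map hA hB] at hAB
  rw [indepFun_iff_map_prod_eq_prod_map_map (hA.prodMk hB) hC, hAB] at hABC
  rw [indepFun_iff_map_prod_eq_prod_map_map hB hC] at hBC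
  rw [indepFun_iff_map_prod_eq_prod_map_map hA (hB.prodMk hC), hBC, ← Measure.prodAssoc_prod,
    ← hABC, AEMeasurable.map_map_of_aemeasurable (by fun_prop) ((hA.prodMk hB).prodMk hC)]
  rfl

section LinearCombinations

variable {Ω : Type*} [MeasurableSpace Ω] {μ : Measure Ω} {X Z : Ω → ℝ}

lemma IndepFun.covariance_linComb [IsProbabilityMeasure μ] (hX : MemLp X 2 μ)
    (hZ : MemLp Z 2 μ) (hXZ : IndepFun X Z μ) (a b c d : ℝ) :
    cov[fun ω => a * X ω + b * Z ω, fun ω => c * X ω + d * Z ω; μ]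
      = a * c * Var[X; μ] + b * d * Var[Z; μ] := by
  have hXZ' : cov[X, Z; μ] = 0 := hXZ.covariance_eq_zero hX hZ
  have hZX' : cov[Z, X; μ] = 0 := by rw [covariance_comm, hXZ']
  change cov[(fun ω => a * X ω) + (fun ω => b * Z ω),
    (fun ω => c * X ω) + (fun ω => d * Z ω); μ] = _
  rw [covariance_add_left (hX.const_mul a) (hZ.const_mul b)
      ((hX.const_mul c).add (hZ.const_mul d)),
    covariance_add_right (hX.const_mul a) (hX.const_mul c) (hZ.const_mul d),
    covariance_add_right (hZ.const_mul b) (hX.const_mul c) (hZ.const_mul d)]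
  simp only [covariance_const_mul_left, covariance_const_mul_right, hXZ', hZX',
    covariance_self hX.aemeasurable, covariance_self hZ.aemeasurable]
  ring

lemma IndepFun.indepFun_linComb_of_hasGaussianLaw (hX : HasGaussianLaw X μ)
    (hZ : HasGaussianLaw Z μ) (hXZ : IndepFun X Z μ) {a b c d : ℝ}
    (h : a * c * Var[X; μ] + b * d * Var[Z; μ] = 0) :
    IndepFun (fun ω => a * X ω + b * Z ω) (fun ω => c * X ω + d * Z ω) μ := by
  have := hX.isProbabilityMeasure
  open ContinuousLinearMap in
  have hlin : HasGaussianLaw (fun ω => (a * X ω + b * Z ω, c * X ω + d * Z ω)) μ := by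
    simpa using (hXZ.hasGaussianLaw hX hZ).map_fun
      ((a • fst ℝ ℝ ℝ + b • snd ℝ ℝ ℝ).prod (c • fst ℝ ℝ ℝ + d • snd ℝ ℝ ℝ))
  exact hlin.indepFun_of_covariance_eq_zero
    ((hXZ.covariance_linComb hX.memLp_two hZ.memLp_two a b c d).trans h)

lemma IndepFun.hasLaw_linComb_gaussianReal {m₁ m₂ : ℝ} {v₁ v₂ : ℝ≥0}
    (hX : HasLaw X (gaussianReal m₁ v₁) μ) (hZ : HasLaw Z (gaussianReal m₂ v₂) μ)
    (hXZ : IndepFun X Z μ) (a b : ℝ) :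
    HasLaw (fun ω => a * X ω + b * Z ω) (gaussianReal (a * m₁ + b * m₂)
      (.mk (a ^ 2) (sq_nonneg _) * v₁ + .mk (b ^ 2) (sq_nonneg _) * v₂)) μ where
  aemeasurable := by
    have := hX.aemeasurable
    have := hZ.aemeasurable
    fun_prop
  map_eq := gaussianReal_add_gaussianReal_of_indepFun
    (hXZ.comp (measurable_const_mul a) (measurable_const_mul b))
    (gaussianReal_const_mul hX a).map_eq (gaussianReal_const_mul hZ b).map_eq

lemma indepFun_estimationError {S : Ω → ℝ} (hX : HasGaussianLaw X μ) (hZ : HasGaussianLaw Z μ)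
    (hS : AEMeasurable S μ) (hXZ : IndepFun X Z μ) (hXZS : IndepFun (fun ω => (X ω, Z ω)) S μ)
    {t : ℝ} (ht : (1 - t) * Var[X; μ] = t * Var[Z; μ]) :
    IndepFun (fun ω => (X ω + t * S ω) - t * (X ω + Z ω + S ω))
      (fun ω => (X ω + Z ω, S ω)) μ := by
  have := hX.isProbabilityMeasure
  have := hX.aemeasurable
  have := hZ.aemeasurable
  have hVW := hXZ.indepFun_linComb_of_hasGaussianLaw hX hZ (a := 1 - t) (b := -t) (c := 1)
    (d := 1) (by linear_combination ht)
  have hVWS := hXZS.comp (φ := fun p : ℝ × ℝ => ((1 - t) * p.1 + -t * p.2, 1 * p.1 + 1 * p.2))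
    (by fun_prop) measurable_id
  convert hVW.indepFun_prodMk_right (by fun_prop) (by fun_prop) hS hVWS using 2 with ω ω
  · ring
  · simp

lemma hasLaw_estimationError {S : Ω → ℝ} {P σ : ℝ≥0} (hPσ : P + σ ≠ 0)
    (hX : HasLaw X (gaussianReal 0 P) μ) (hZ : HasLaw Z (gaussianReal 0 σ) μ)
    (hXZ : IndepFun X Z μ) :
    HasLaw (fun ω => (X ω + P / (P + σ) * S ω) - P / (P + σ) * (X ω + Z ω + S ω))
      (gaussianReal 0 (P * σ / (P + σ))) μ := by
  have hPσ' : (P : ℝ) + σ ≠ 0 := mod_cast hPσ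
  convert (hXZ.hasLaw_linComb_gaussianReal hX hZ (1 - P / (P + σ)) (-(P / (P + σ)))).congr
    (Y := fun ω => (X ω + P / (P + σ) * S ω) - P / (P + σ) * (X ω + Z ω + S ω))
    (ae_of_all _ fun ω => by ring) using 2
  · ring
  · ext
    push_cast
    field_simp
    ring

end LinearCombinations

end ProbabilityTheory

noncomputable def gaussianEntropy (v : ℝ≥0) : ℝ := logb 2 (2 * π * exp 1 * v) / 2

section GaussianDensity

variable {m : ℝ} {v : ℝ≥0}

lemma logb_gaussianPDFReal (hv : v ≠ 0) (x : ℝ) :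
    logb 2 (gaussianPDFReal m v x) = -(log (2 * π * v) + (x - m) ^ 2 / v) / (2 * log 2) := by
  have hv' : (0 : ℝ) < v := by positivity
  rw [gaussianPDFReal, logb, log_mul (by positivity) (exp_ne_zero _), log_inv,
    log_sqrt (by positivity), log_exp]
  field_simp
  ring

lemma integral_sq_sub_gaussianReal : ∫ x, (x - m) ^ 2 ∂gaussianReal m v = v := by
  have := variance_eq_integral (X := fun x : ℝ => x) (μ := gaussianReal m v) aemeasurable_id'
  rwa [variance_fun_id_gaussianReal, integral_id_gaussianReal, eq_comm] at this

lemma integrable_logb_gaussianPDFReal (hv : v ≠ 0) :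
    Integrable (fun x => logb 2 (gaussianPDFReal m v x)) (gaussianReal m v) := by
  simp_rw [logb_gaussianPDFReal hv]
  have hsq : Integrable (fun x : ℝ => (x - m) ^ 2) (gaussianReal m v) :=
    ((memLp_id_gaussianReal 2).sub (memLp_const m)).integrable_sq
  exact (((integrable_const _).add (hsq.div_const _)).neg).div_const _

lemma integral_logb_gaussianPDFReal (hv : v ≠ 0) :
    ∫ x, logb 2 (gaussianPDFReal m v x) ∂gaussianReal m v = -gaussianEntropy v := by
  have hv' : (0 : ℝ) < v := by positivity
  have hsq : Integrable (fun x : ℝ => (x - m) ^ 2) (gaussianReal m v) :=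
    ((memLp_id_gaussianReal 2).sub (memLp_const m)).integrable_sq
  simp_rw [logb_gaussianPDFReal hv]
  rw [integral_div, integral_neg, integral_add (integrable_const _) (hsq.div_const _),
    integral_div, integral_sq_sub_gaussianReal, integral_const, gaussianEntropy, logb,
    show 2 * π * exp 1 * v = exp 1 * (2 * π * v) by ring,
    log_mul (exp_ne_zero _) (by positivity), log_exp]
  simp only [probReal_univ, smul_eq_mul, one_mul, neg_add_rev]
  field_simp
  ring

end GaussianDensity

lemma gaussianEntropy_sub_gaussianEntropy {v₁ v₂ : ℝ≥0} (hv₁ : v₁ ≠ 0) (hv₂ : v₂ ≠ 0) :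
    gaussianEntropy v₁ - gaussianEntropy v₂ = logb 2 (v₁ / v₂) / 2 := by
  have hv₁' : (0 : ℝ) < v₁ := by positivity
  have hv₂' : (0 : ℝ) < v₂ := by positivity
  rw [gaussianEntropy, gaussianEntropy, ← sub_div, ← logb_div (by positivity) (by positivity)]
  congr 2
  field_simp

section DifferentialEntropy

variable {Ω E : Type*} [MeasureSpace Ω] [MeasurableSpace E] {μ : Measure E}

lemma dEnt_eq_of_map_eq_withDensity [SigmaFinite μ] {U : Ω → E} {ρ : E → ℝ≥0∞}
    (hρ : Measurable ρ) (hρ_lt_top : ∀ᵐ x ∂μ, ρ x < ∞)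
    (hU : Measure.map U volume = μ.withDensity ρ) :
    dEnt μ U = -∫ x, logb 2 (ρ x).toReal ∂μ.withDensity ρ := by
  rw [dEnt, integral_withDensity_eq_integral_toReal_smul hρ hρ_lt_top]
  congr 1
  refine integral_congr_ae ?_
  filter_upwards [Measure.rnDeriv_withDensity μ hρ] with x hx
  rw [pdf_def, hU, hx, smul_eq_mul]

lemma dEnt_comp_measurePreserving [IsFiniteMeasure (volume : Measure Ω)] [SigmaFinite μ]
    (e : E ≃ᵐ E) (he : MeasurePreserving e μ μ) {U : Ω → E} (hU : AEMeasurable U) :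
    dEnt μ (fun ω => e (U ω)) = dEnt μ U := by
  have hpdf : (fun x => pdf (fun ω => e (U ω)) volume μ (e x)) =ᵐ[μ] pdf U volume μ := by
    have h := e.measurableEmbedding.rnDeriv_map (Measure.map U volume) μ
    rwa [he.map_eq, AEMeasurable.map_map_of_aemeasurable e.measurable.aemeasurable hU] at h
  rw [dEnt, dEnt, ← he.integral_comp' (fun y => (pdf (fun ω => e (U ω)) volume μ y).toReal
    * logb 2 (pdf (fun ω => e (U ω)) volume μ y).toReal)]
  refine congrArg Neg.neg (integral_congr_ae ?_)
  filter_upwards [hpdf] with x hx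
  rw [hx]

end DifferentialEntropy

noncomputable def shear (t : ℝ) : ℝ × ℝ ≃ᵐ ℝ × ℝ where
  toFun p := (p.1 + t * p.2, p.2)
  invFun p := (p.1 - t * p.2, p.2)
  left_inv p := by simp
  right_inv p := by simp
  measurable_toFun := by dsimp; fun_prop
  measurable_invFun := by dsimp; fun_prop

lemma measurePreserving_shear (t : ℝ) : MeasurePreserving (shear t) := by
  have hskew : MeasurePreserving (fun p : ℝ × ℝ => (p.1, p.2 + t * p.1))
      (volume.prod volume) (volume.prod volume) :=
    (MeasurePreserving.id volume).skew_product (g := fun y u => u + t * y) (by fun_prop)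
      (ae_of_all _ fun y => map_add_right_eq_self volume (t * y))
  exact Measure.measurePreserving_swap.comp (hskew.comp Measure.measurePreserving_swap)

section GaussianEntropy

variable {Ω : Type*} [MeasureSpace Ω]

lemma dEnt_of_map_eq_gaussianReal {W : Ω → ℝ} {m : ℝ} {v : ℝ≥0} (hv : v ≠ 0)
    (hW : Measure.map W volume = gaussianReal m v) : dEnt volume W = gaussianEntropy v := by
  rw [gaussianReal_of_var_ne_zero m hv] at hW
  rw [dEnt_eq_of_map_eq_withDensity (measurable_gaussianPDF m v)
    (ae_of_all _ fun _ => gaussianPDF_lt_top) hW, ← gaussianReal_of_var_ne_zero m hv]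
  simp_rw [toReal_gaussianPDF]
  rw [integral_logb_gaussianPDFReal hv, neg_neg]

variable [IsProbabilityMeasure (volume : Measure Ω)] {W B : Ω → ℝ} {m₁ m₂ : ℝ} {v₁ v₂ : ℝ≥0}

lemma dEnt_prodMk_of_indepFun_gaussianReal (hv₁ : v₁ ≠ 0) (hv₂ : v₂ ≠ 0)
    (hW : HasLaw W (gaussianReal m₁ v₁)) (hB : HasLaw B (gaussianReal m₂ v₂)) (hWB : IndepFun W B) :
    dEnt volume (fun ω => (W ω, B ω)) = gaussianEntropy v₁ + gaussianEntropy v₂ := by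
  have hρ : Measurable fun p : ℝ × ℝ => gaussianPDF m₁ v₁ p.1 * gaussianPDF m₂ v₂ p.2 :=
    ((measurable_gaussianPDF m₁ v₁).comp measurable_fst).mul
      ((measurable_gaussianPDF m₂ v₂).comp measurable_snd)
  have hdens : (gaussianReal m₁ v₁).prod (gaussianReal m₂ v₂)
      = volume.withDensity fun p : ℝ × ℝ => gaussianPDF m₁ v₁ p.1 * gaussianPDF m₂ v₂ p.2 := by
    rw [gaussianReal_of_var_ne_zero m₁ hv₁, gaussianReal_of_var_ne_zero m₂ hv₂,
      prod_withDensity (measurable_gaussianPDF _ _) (measurable_gaussianPDF _ _)]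
    rfl
  have hlaw : Measure.map (fun ω => (W ω, B ω)) volume
      = volume.withDensity fun p : ℝ × ℝ => gaussianPDF m₁ v₁ p.1 * gaussianPDF m₂ v₂ p.2 := by
    rw [(indepFun_iff_map_prod_eq_prod_map_map hW.aemeasurable hB.aemeasurable).1 hWB,
      hW.map_eq, hB.map_eq, hdens]
  have hlogb (p : ℝ × ℝ) : logb 2 (gaussianPDF m₁ v₁ p.1 * gaussianPDF m₂ v₂ p.2).toReal
      = logb 2 (gaussianPDFReal m₁ v₁ p.1) + logb 2 (gaussianPDFReal m₂ v₂ p.2) := by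
    rw [ENNReal.toReal_mul, toReal_gaussianPDF, toReal_gaussianPDF,
      logb_mul (gaussianPDFReal_pos _ _ _ hv₁).ne' (gaussianPDFReal_pos _ _ _ hv₂).ne']
  rw [dEnt_eq_of_map_eq_withDensity hρ
    (ae_of_all _ fun _ => ENNReal.mul_lt_top gaussianPDF_lt_top gaussianPDF_lt_top) hlaw,
    ← hdens]
  simp_rw [hlogb]
  rw [integral_add ((integrable_logb_gaussianPDFReal hv₁).comp_fst _)
      ((integrable_logb_gaussianPDFReal hv₂).comp_snd _),
    integral_fun_fst (fun x => logb 2 (gaussianPDFReal m₁ v₁ x)),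
    integral_fun_snd (fun x => logb 2 (gaussianPDFReal m₂ v₂ x)), integral_logb_gaussianPDFReal hv₁,
    integral_logb_gaussianPDFReal hv₂]
  simp only [probReal_univ, smul_eq_mul, mul_neg, one_mul, neg_add_rev, neg_neg]
  ring

lemma dEnt_add_mul_prodMk_of_indepFun_gaussianReal (hv₁ : v₁ ≠ 0) (hv₂ : v₂ ≠ 0)
    (hW : HasLaw W (gaussianReal m₁ v₁)) (hB : HasLaw B (gaussianReal m₂ v₂)) (hWB : IndepFun W B)
    (t : ℝ) :
    dEnt volume (fun ω => (W ω + t * B ω, B ω)) = gaussianEntropy v₁ + gaussianEntropy v₂ := by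
  rw [show (fun ω => (W ω + t * B ω, B ω)) = fun ω => shear t (W ω, B ω) from rfl,
    dEnt_comp_measurePreserving _ (measurePreserving_shear t)
      (hW.aemeasurable.prodMk hB.aemeasurable)]
  exact dEnt_prodMk_of_indepFun_gaussianReal hv₁ hv₂ hW hB hWB

lemma dMI_sub_dMI_of_gaussianReal {X S V Y : Ω → ℝ} {mX mS mV mY : ℝ} {vX vS vV vY : ℝ≥0}
    (hvX : vX ≠ 0) (hvS : vS ≠ 0) (hvV : vV ≠ 0) (hvY : vY ≠ 0)
    (hX : HasLaw X (gaussianReal mX vX)) (hS : HasLaw S (gaussianReal mS vS))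
    (hV : HasLaw V (gaussianReal mV vV)) (hY : HasLaw Y (gaussianReal mY vY))
    (hXS : IndepFun X S) (hVY : IndepFun V Y) {t : ℝ} (hU : ∀ ω, X ω + t * S ω = V ω + t * Y ω) :
    dMI (fun ω => X ω + t * S ω) Y - dMI (fun ω => X ω + t * S ω) S
      = gaussianEntropy vX - gaussianEntropy vV := by
  have hUY : (fun ω => (X ω + t * S ω, Y ω)) = fun ω => (V ω + t * Y ω, Y ω) := by simp only [hU]
  rw [dMI, dMI, hUY, dEnt_add_mul_prodMk_of_indepFun_gaussianReal hvV hvY hV hY hVY,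
    dEnt_add_mul_prodMk_of_indepFun_gaussianReal hvX hvS hX hS hXS,
    dEnt_of_map_eq_gaussianReal hvY hY.map_eq, dEnt_of_map_eq_gaussianReal hvS hS.map_eq]
  ring

end GaussianEntropy

/-- Costa's dirty-paper coding identity: with `t = P/(P+σ_Z²)`, the estimation error
`U − tY` is independent of `(X+Z, S)`, and `I(U;Y) − I(U;S) = ½ log₂(1+P/σ_Z²)`. -/
theorem costa_dirty_paper {Ω : Type*} [MeasureSpace Ω]
    [IsProbabilityMeasure (volume : Measure Ω)]
    (X Z S : Ω → ℝ) (hX : Measurable X) (hZ : Measurable Z) (hS : Measurable S)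
    (P σZ σS : NNReal) (hP : 0 < P) (hσZ : 0 < σZ) (hσS : 0 < σS)
    (hXZ : IndepFun X Z)
    (hXZS : IndepFun (fun ω => (X ω, Z ω)) S)
    (hlX : Measure.map X volume = gaussianReal 0 P)
    (hlZ : Measure.map Z volume = gaussianReal 0 σZ)
    (hlS : Measure.map S volume = gaussianReal 0 σS) :
    IndepFun
        (fun ω => (X ω + ((P : ℝ) / ((P : ℝ) + (σZ : ℝ))) * S ω)
          - ((P : ℝ) / ((P : ℝ) + (σZ : ℝ))) * (X ω + Z ω + S ω))
        (fun ω => (X ω + Z ω, S ω))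
    ∧ dMI (fun ω => X ω + ((P : ℝ) / ((P : ℝ) + (σZ : ℝ))) * S ω)
          (fun ω => X ω + Z ω + S ω)
        - dMI (fun ω => X ω + ((P : ℝ) / ((P : ℝ) + (σZ : ℝ))) * S ω) S
      = (1 / 2) * Real.logb 2 (1 + (P : ℝ) / (σZ : ℝ)) := by
  set t : ℝ := (P : ℝ) / ((P : ℝ) + (σZ : ℝ)) with ht
  have hXg : HasLaw X (gaussianReal 0 P) := ⟨hX.aemeasurable, hlX⟩
  have hZg : HasLaw Z (gaussianReal 0 σZ) := ⟨hZ.aemeasurable, hlZ⟩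
  have hSg : HasLaw S (gaussianReal 0 σS) := ⟨hS.aemeasurable, hlS⟩
  have hindep := indepFun_estimationError hXg.hasGaussianLaw hZg.hasGaussianLaw hS.aemeasurable
    hXZ hXZS (t := t) (by
      rw [hXg.variance_eq, hZg.variance_eq, variance_id_gaussianReal, variance_id_gaussianReal, ht]
      field_simp
      ring)
  refine ⟨hindep, ?_⟩
  have hVg := hasLaw_estimationError (S := S) (by positivity) hXg hZg hXZ
  have hYg : HasLaw (fun ω => X ω + Z ω + S ω) (gaussianReal (0 + 0 + 0) (P + σZ + σS)) :=
    ⟨by fun_prop, gaussianReal_add_gaussianReal_of_indepFun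
      (hXZS.comp (measurable_fst.add measurable_snd) measurable_id)
      (gaussianReal_add_gaussianReal_of_indepFun hXZ hlX hlZ) hlS⟩
  rw [dMI_sub_dMI_of_gaussianReal hP.ne' hσS.ne' (by positivity) (by positivity) hXg hSg hVg hYg
      (hXZS.comp measurable_fst measurable_id)
      (hindep.comp (measurable_id (α := ℝ)) (measurable_fst.add measurable_snd)) (fun ω => by ring),
    gaussianEntropy_sub_gaussianEntropy hP.ne' (by positivity)]
  push_cast
  rw [show (P : ℝ) / (P * σZ / (P + σZ)) = 1 + P / σZ by field_simp; ring]
  ring
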